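/- arXiv:1009.0720 — 5 statements merged into one kernel-verified Lean document; each statement's English description precedes it below -/
import Mathlib

section
/- Let I ⊆ {1,…,m} be nonempty. If there exists x₀ ∈ ℝ^m_{>0} such that the ω-limit set ω(x₀) of the forward solution of the mass-action system ẋ = Γ R(x) with x(0) = x₀ satisfies ω(x₀) ∩ L_I ≠ ∅, then I is a semi-locking set. -/
open scoped BigOperators
open Matrix Filter

/-- The stoichiometric matrix `Γ ∈ ℝ^{m×r}`, `Γ j i = β i j - α i j`. -/
noncomputable def Gamma {m r : ℕ} (a b : Fin r → Fin m → ℕ) : Matrix (Fin m) (Fin r) ℝ :=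
  fun j i => (b i j : ℝ) - (a i j : ℝ)

/-- Mass-action reaction rates `R_i(x) = k_i ∏_j x_j^{α_{ij}}`. -/
noncomputable def rate {m r : ℕ} (a : Fin r → Fin m → ℕ) (k : Fin r → ℝ)
    (x : Fin m → ℝ) : Fin r → ℝ :=
  fun i => k i * ∏ j, x j ^ (a i j)

/-- A nonempty `I` is a semi-locking set (siphon) if every reaction producing a species
in `I` consumes a species in `I`. -/
def IsSemiLocking {m r : ℕ} (a b : Fin r → Fin m → ℕ) (I : Set (Fin m)) : Prop :=
  I.Nonempty ∧ ∀ i : Fin r, (∃ j ∈ I, 0 < b i j) → ∃ l ∈ I, 0 < a i l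

/-- A nonempty `I` is a locking set (deadlock) if every reaction consumes a species in `I`. -/
def IsLocking {m r : ℕ} (a : Fin r → Fin m → ℕ) (I : Set (Fin m)) : Prop :=
  I.Nonempty ∧ ∀ i : Fin r, ∃ l ∈ I, 0 < a i l

/-- `L_I = {x ∈ ℝ^m_{≥0} : x_i = 0 for i ∈ I, x_i > 0 for i ∉ I}`. -/
def LI {m : ℕ} (I : Set (Fin m)) : Set (Fin m → ℝ) :=
  {x | (∀ i, 0 ≤ x i) ∧ (∀ i ∈ I, x i = 0) ∧ ∀ i ∉ I, 0 < x i}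

/-- Boundary of the positive orthant of `ℝ^m`. -/
def posBoundary (m : ℕ) : Set (Fin m → ℝ) :=
  {x | (∀ i, 0 ≤ x i) ∧ ∃ i, x i = 0}

/-- The stoichiometric subspace `S = range Γ`. -/
noncomputable def stoichSubspace {m r : ℕ} (a b : Fin r → Fin m → ℕ) :
    Submodule ℝ (Fin m → ℝ) :=
  LinearMap.range (Gamma a b).mulVecLin

/-- The positive stoichiometric compatibility class `C_{x₀} = (x₀ + S) ∩ ℝ^m_{>0}`. -/
def compatClass {m r : ℕ} (a b : Fin r → Fin m → ℕ) (x₀ : Fin m → ℝ) :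
    Set (Fin m → ℝ) :=
  {x | (∀ i, 0 < x i) ∧ x - x₀ ∈ stoichSubspace a b}

/-- `F_I = closure(C_{x₀}) ∩ L_I`. -/
def FI {m r : ℕ} (a b : Fin r → Fin m → ℕ) (x₀ : Fin m → ℝ) (I : Set (Fin m)) :
    Set (Fin m → ℝ) :=
  closure (compatClass a b x₀) ∩ LI I

/-- The dimension of the affine hull of a set in `ℝ^m`. -/
noncomputable def setDim {m : ℕ} (F : Set (Fin m → ℝ)) : ℕ :=
  Module.finrank ℝ (affineSpan ℝ F).direction

/-- `F` is a facet of a compatibility class: nonempty with affine-hull dimension `s - 1`,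
where `s = rank Γ`. -/
def IsFacet {m r : ℕ} (a b : Fin r → Fin m → ℕ) (F : Set (Fin m → ℝ)) : Prop :=
  F.Nonempty ∧ setDim F = (Gamma a b).rank - 1

/-- `F` is a vertex: nonempty with affine-hull dimension `0`. -/
def IsVertex {m : ℕ} (F : Set (Fin m → ℝ)) : Prop :=
  F.Nonempty ∧ setDim F = 0

/-- A global forward solution of the mass-action system `ẋ = Γ R(x)`. -/
def IsForwardSolution {m r : ℕ} (a b : Fin r → Fin m → ℕ) (k : Fin r → ℝ)
    (x : ℝ → Fin m → ℝ) : Prop :=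
  ∀ t : ℝ, 0 ≤ t → HasDerivAt x ((Gamma a b).mulVec (rate a k (x t))) t

/-- The ω-limit set of a forward trajectory. -/
def omegaLimitSet {m : ℕ} (x : ℝ → Fin m → ℝ) : Set (Fin m → ℝ) :=
  {y | MapClusterPt y atTop x}

/-- `R_i ≼_I R_j` : `α i l ≥ α j l` for all `l ∈ I`, strict for some `l ∈ I`. -/
def prec {m r : ℕ} (a : Fin r → Fin m → ℕ) (I : Set (Fin m)) (i j : Fin r) : Prop :=
  (∀ l ∈ I, a j l ≤ a i l) ∧ ∃ l ∈ I, a j l < a i l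

/-- `R_I = {(i,j) : R_i ≼_I R_j}`. -/
def precSet {m r : ℕ} (a : Fin r → Fin m → ℕ) (I : Set (Fin m)) : Set (Fin r × Fin r) :=
  {p | prec a I p.1 p.2}

/-- The feasibility cone relative to `J`. -/
def feasCone {r : ℕ} (J : Set (Fin r × Fin r)) (ε : ℝ) : Set (Fin r → ℝ) :=
  {v | (∀ i, 0 ≤ v i) ∧ ∀ p ∈ J, v p.1 ≤ ε * v p.2}

/-- The criticality cone `C(I)`. -/
def critCone {m r : ℕ} (a b : Fin r → Fin m → ℕ) (I : Set (Fin m)) : Set (Fin r → ℝ) :=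
  {v | (∀ i, 0 ≤ v i) ∧ ∀ l ∈ I, (Gamma a b).mulVec v l ≤ 0}

/-- `ker(I,J,ε)`. -/
def kerIJ {m r : ℕ} (a b : Fin r → Fin m → ℕ) (I : Set (Fin m))
    (J : Set (Fin r × Fin r)) (ε : ℝ) : Set (Fin r → ℝ) :=
  {v | (∀ i, 0 ≤ v i) ∧ (∀ l ∈ I, (Gamma a b).mulVec v l = 0) ∧ ∀ p ∈ J, v p.1 = ε * v p.2}

/-- Dynamical non-emptiability (Angeli–De Leenheer–Sontag): `F_ε(I) ∩ C(I) = {0}`. -/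
def DynNonEmptiable {m r : ℕ} (a b : Fin r → Fin m → ℕ) (I : Set (Fin m)) : Prop :=
  ∃ ε > (0:ℝ), critCone a b I ∩ feasCone (precSet a I) ε = {0}

/-- Weak dynamical non-emptiability: `C(I) ∩ F_ε(J) ⊆ ker(I,J,ε)` for some `ε > 0`, `J ⊆ R_I`. -/
def WeaklyDynNonEmptiable {m r : ℕ} (a b : Fin r → Fin m → ℕ) (I : Set (Fin m)) : Prop :=
  ∃ ε > (0:ℝ), ∃ J ⊆ precSet a I, critCone a b I ∩ feasCone J ε ⊆ kerIJ a b I J ε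

/-- `I` contains the support of a semi-conservation vector. -/
def ContainsSemiConsSupport {m r : ℕ} (a b : Fin r → Fin m → ℕ) (I : Set (Fin m)) : Prop :=
  ∃ c : Fin m → ℝ, (∀ i, 0 ≤ c i) ∧ (∃ i, 0 < c i) ∧
    Matrix.vecMul c (Gamma a b) = 0 ∧ ∀ i, 0 < c i → i ∈ I

/-- A semi-locking set is critical if it contains no support of a semi-conservation vector. -/
def IsCritical {m r : ℕ} (a b : Fin r → Fin m → ℕ) (I : Set (Fin m)) : Prop :=
  ¬ ContainsSemiConsSupport a b I

/-- Weak reversibility: in the directed reaction graph on complexes, the reactant complex of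
every reaction is reachable from its product complex (equivalently, every connected
component is strongly connected). -/
def WeaklyReversible {m r : ℕ} (a b : Fin r → Fin m → ℕ) : Prop :=
  ∀ i : Fin r,
    Relation.ReflTransGen (fun y z : Fin m → ℕ => ∃ i', a i' = y ∧ b i' = z) (b i) (a i)

/-- The system is conservative: `cᵀ Γ = 0` for some strictly positive `c`. -/
def Conservative {m r : ℕ} (a b : Fin r → Fin m → ℕ) : Prop :=
  ∃ c : Fin m → ℝ, (∀ i, 0 < c i) ∧ Matrix.vecMul c (Gamma a b) = 0

open Set Filter Topology

/-!
Suppose reaction `i` produces a species `j ∈ I` but consumes no species of `I`, and let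
`y ∈ ω(x₀) ∩ L_I`. Every reaction consuming `j` vanishes at `y`, while reaction `i` runs at a
positive rate there, so `(Γ R(y))_j > 0`: at the boundary point `y` the vector field points
strictly into `{x_j > 0}`.

Mass-action trajectories starting in the open orthant stay in it: up to the first zero of a
coordinate, `ẋ_j ≥ -M x_j`, and Grönwall's inequality keeps `x_j` away from `0`. A trajectory
confined to `{x_j ≥ 0}` cannot accumulate at such a `y`: near `y`, `x_j` increases at a rate
`δ > 0` and the speed is bounded by `V`, so a visit `ε`-close to `y` is preceded by a stay of
length at most `O(ε)/δ` in a fixed ball around `y`, too short to have entered the ball from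
outside and (at late times) too short to have started in it at time `0`.
-/

theorem exists_first_entry {X : Type*} [TopologicalSpace X] {γ : ℝ → X} {a b : ℝ} {C : Set X}
    (hγ : ContinuousOn γ (Icc a b)) (hC : IsClosed C) (h : ∃ t ∈ Icc a b, γ t ∈ C) :
    ∃ τ ∈ Icc a b, γ τ ∈ C ∧ ∀ s ∈ Ico a τ, γ s ∉ C := by
  set A := Icc a b ∩ γ ⁻¹' C
  have hbdd : BddBelow A := ⟨a, fun s hs => hs.1.1⟩
  obtain ⟨hτab, hτC⟩ : sInf A ∈ A :=
    (hγ.preimage_isClosed_of_isClosed isClosed_Icc hC).csInf_mem h hbdd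
  refine ⟨sInf A, hτab, hτC, fun s hs hsC => ?_⟩
  exact hs.2.not_ge (csInf_le hbdd ⟨⟨hs.1, hs.2.le.trans hτab.2⟩, hsC⟩)

theorem exists_last_exit {X : Type*} [PseudoMetricSpace X] {γ : ℝ → X} {a b η : ℝ} {y : X}
    (hγ : ContinuousOn γ (Icc a b)) (hab : a ≤ b) (hb : dist (γ b) y < η) :
    ∃ u ∈ Icc a b, (u = a ∨ η ≤ dist (γ u) y) ∧ ∀ s ∈ Icc u b, dist (γ s) y ≤ η := by
  have hdist : ContinuousOn (fun s => dist (γ s) y) (Icc a b) :=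
    (continuous_id.dist continuous_const).comp_continuousOn hγ
  by_cases hfar : ∃ s ∈ Icc a b, η ≤ dist (γ s) y
  · set A := Icc a b ∩ (fun s => dist (γ s) y) ⁻¹' Ici η
    have hbdd : BddAbove A := ⟨b, fun s hs => hs.1.2⟩
    obtain ⟨hu, hfar_u⟩ : sSup A ∈ A :=
      (hdist.preimage_isClosed_of_isClosed isClosed_Icc isClosed_Ici).csSup_mem hfar hbdd
    have hub : sSup A < b := hu.2.lt_of_ne fun h => (hb.trans_le (h ▸ hfar_u)).false
    have hnear : Ioc (sSup A) b ⊆ Icc a b ∩ (fun s => dist (γ s) y) ⁻¹' Iic η := by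
      intro s hs
      have hs' : s ∈ Icc a b := ⟨hu.1.trans hs.1.le, hs.2⟩
      exact ⟨hs', show dist (γ s) y ≤ η from
        le_of_not_ge fun h => (le_csSup hbdd ⟨hs', h⟩).not_gt hs.1⟩
    refine ⟨sSup A, hu, Or.inr hfar_u, fun s hs => ?_⟩
    rw [← closure_Ioc hub.ne] at hs
    exact ((hdist.preimage_isClosed_of_isClosed isClosed_Icc isClosed_Iic).closure_subset_iff.2
      hnear hs).2
  · refine ⟨a, left_mem_Icc.2 hab, Or.inl rfl, fun s hs => ?_⟩
    exact (not_le.1 fun h => hfar ⟨s, ⟨hs.1, hs.2⟩, h⟩).le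

theorem not_mapClusterPt_of_inward {E : Type*} [NormedAddCommGroup E] [NormedSpace ℝ E]
    {f : E → E} {x : ℝ → E} {y : E} (ℓ : E →L[ℝ] ℝ)
    (hf : ContinuousAt f y) (hx : ∀ t, 0 ≤ t → HasDerivAt x (f (x t)) t)
    (hℓx : ∀ t, 0 ≤ t → 0 ≤ ℓ (x t)) (hℓy : ℓ y = 0) (hℓf : 0 < ℓ (f y)) :
    ¬ MapClusterPt y atTop x := by
  intro hy
  set δ := ℓ (f y) / 2
  set V := ‖f y‖ + 1
  obtain ⟨η, hη, hball⟩ : ∃ η > 0, ∀ z ∈ Metric.closedBall y η, δ ≤ ℓ (f z) ∧ ‖f z‖ ≤ V := by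
    have hℓ : ∀ᶠ z in 𝓝 y, δ < ℓ (f z) :=
      (ℓ.continuous.continuousAt.comp hf).eventually (lt_mem_nhds (half_lt_self hℓf))
    have hV : ∀ᶠ z in 𝓝 y, ‖f z‖ < V :=
      (continuous_norm.continuousAt.comp hf).eventually (gt_mem_nhds (lt_add_one _))
    exact Metric.nhds_basis_closedBall.eventually_iff.1
      ((hℓ.and hV).mono fun z hz => ⟨hz.1.le, hz.2.le⟩)
  have hδ : 0 < δ := half_pos hℓf
  have hV : 0 < V := by positivity
  set c := ‖ℓ‖
  -- A stay in the `η`-ball ending `ε`-close to `y` lasts at most `c ε / δ`, since `ℓ ∘ x ≥ 0`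
  -- grows at rate `δ` there; this choice of `ε` makes the distance covered meanwhile `< η - ε`.
  set ε := δ * η / (2 * (V * c + δ))
  have hε : 0 < ε := by positivity
  have hεη : ε * (2 * (V * c + δ)) = δ * η := div_mul_cancel₀ _ (by positivity)
  have hεη' : ε ≤ η := by nlinarith [mul_nonneg (mul_nonneg hV.le (norm_nonneg ℓ)) hε.le]
  obtain ⟨t, ht, hxt⟩ : ∃ t ≥ c * ε / δ + 1, dist (x t) y < ε :=
    ((mapClusterPt_iff_frequently.1 hy _ (Metric.ball_mem_nhds y hε)).and_eventually
      (eventually_ge_atTop _)).exists.imp fun t h => ⟨h.2, h.1⟩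
  have ht0 : 0 ≤ t := by linarith [div_nonneg (mul_nonneg (norm_nonneg ℓ) hε.le) hδ.le]
  obtain ⟨u, hu, hexit, hin⟩ := exists_last_exit (η := η)
    (fun s hs => (hx s hs.1).continuousAt.continuousWithinAt) ht0 (hxt.trans_le hεη')
  have hderiv : ∀ s ∈ Icc u t, HasDerivAt x (f (x s)) s := fun s hs => hx s (hu.1.trans hs.1)
  have hbound : ∀ s ∈ Ico u t, δ ≤ ℓ (f (x s)) ∧ ‖f (x s)‖ ≤ V := fun s hs =>
    hball _ (Metric.mem_closedBall.2 (hin s (Ico_subset_Icc_self hs)))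
  have hgrow : ℓ (x u) + δ * (t - u) ≤ ℓ (x t) := by
    have hline : ∀ s, HasDerivAt (fun s => ℓ (x u) + δ * (s - u)) δ s := fun s => by
      simpa using (((hasDerivAt_id s).sub_const u).const_mul δ).const_add (ℓ (x u))
    refine image_le_of_deriv_right_le_deriv_boundary (by fun_prop)
      (fun s _ => (hline s).hasDerivWithinAt) (by simp)
      (ℓ.continuous.comp_continuousOn fun s hs => (hderiv s hs).continuousAt.continuousWithinAt)
      (fun s hs => (ℓ.hasFDerivAt.comp_hasDerivAt s
        (hderiv s (Ico_subset_Icc_self hs))).hasDerivWithinAt)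
      (fun s hs => (hbound s hs).1) ⟨hu.2, le_rfl⟩
  have hspeed : ‖x t - x u‖ ≤ V * (t - u) :=
    norm_image_sub_le_of_norm_deriv_le_segment' (fun s hs => (hderiv s hs).hasDerivWithinAt)
      (fun s hs => (hbound s hs).2) t ⟨hu.2, le_rfl⟩
  have hℓt : ℓ (x t) ≤ c * ε := by
    calc ℓ (x t) = ℓ (x t - y) := by rw [map_sub, hℓy, sub_zero]
      _ ≤ c * ‖x t - y‖ := (le_abs_self _).trans (ℓ.le_opNorm _)
      _ ≤ c * ε := by gcongr; rw [← dist_eq_norm]; exact hxt.le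
  have hℓu := hℓx u hu.1
  rcases hexit with rfl | hfar
  · have : δ * (c * ε / δ) = c * ε := mul_div_cancel₀ _ hδ.ne'
    nlinarith
  · have : η ≤ V * (t - u) + ε := by
      calc η ≤ dist (x u) y := hfar
        _ ≤ dist (x u) (x t) + dist (x t) y := dist_triangle _ _ _
        _ ≤ V * (t - u) + ε := by rw [dist_comm, dist_eq_norm]; linarith
    nlinarith

theorem pow_le_mul_pow {z ρ : ℝ} (hz : 0 ≤ z) (hzρ : z ≤ ρ) (hρ : 1 ≤ ρ) {n : ℕ}
    (hn : n ≠ 0) : z ^ n ≤ z * ρ ^ n := by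
  obtain ⟨n, rfl⟩ := Nat.exists_eq_succ_of_ne_zero hn
  rw [pow_succ' z]
  gcongr
  exact (pow_le_pow_left₀ hz hzρ n).trans (pow_le_pow_right₀ hρ n.le_succ)

theorem prod_pow_le_mul_pow_sum {ι : Type*} [Fintype ι] [DecidableEq ι] {z : ι → ℝ}
    {ρ : ℝ} (hz : ∀ l, 0 ≤ z l) (hzρ : ∀ l, z l ≤ ρ) (hρ : 1 ≤ ρ) {e : ι → ℕ} {j : ι}
    (hj : e j ≠ 0) : ∏ l, z l ^ e l ≤ z j * ρ ^ ∑ l, e l := by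
  calc ∏ l, z l ^ e l = z j ^ e j * ∏ l ∈ Finset.univ.erase j, z l ^ e l :=
        (Finset.mul_prod_erase _ _ (Finset.mem_univ j)).symm
    _ ≤ z j * ρ ^ e j * ∏ l ∈ Finset.univ.erase j, ρ ^ e l :=
        mul_le_mul (pow_le_mul_pow (hz j) (hzρ j) hρ hj)
          (Finset.prod_le_prod (fun l _ => pow_nonneg (hz l) _)
            fun l _ => pow_le_pow_left₀ (hz l) (hzρ l) _)
          (Finset.prod_nonneg fun l _ => pow_nonneg (hz l) _)
          (mul_nonneg (hz j) (pow_nonneg (zero_le_one.trans hρ) _))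
    _ = z j * ρ ^ ∑ l, e l := by
        rw [Finset.prod_pow_eq_pow_sum, mul_assoc, ← pow_add,
          Finset.add_sum_erase _ _ (Finset.mem_univ j)]

section MassAction

variable {m r : ℕ} {a b : Fin r → Fin m → ℕ} {k : Fin r → ℝ}

theorem continuous_rate (a : Fin r → Fin m → ℕ) (k : Fin r → ℝ) : Continuous (rate a k) :=
  continuous_pi fun _ => continuous_const.mul <|
    continuous_finsetProd _ fun l _ => (continuous_apply l).pow _

theorem rate_nonneg {z : Fin m → ℝ} (hz : ∀ l, 0 ≤ z l) {i : Fin r} (hk : 0 ≤ k i) :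
    0 ≤ rate a k z i :=
  mul_nonneg hk (Finset.prod_nonneg fun l _ => pow_nonneg (hz l) _)

theorem rate_pos {z : Fin m → ℝ} {i : Fin r} (hk : 0 < k i) (hz : ∀ l, 0 < a i l → 0 < z l) :
    0 < rate a k z i := by
  refine mul_pos hk (Finset.prod_pos fun l _ => ?_)
  rcases (a i l).eq_zero_or_pos with h | h
  · simp [h]
  · exact pow_pos (hz l h) _

theorem rate_eq_zero {z : Fin m → ℝ} {i : Fin r} {j : Fin m} (hz : z j = 0)
    (ha : a i j ≠ 0) : rate a k z i = 0 :=
  mul_eq_zero_of_right _ (Finset.prod_eq_zero (Finset.mem_univ j) (by simp [hz, ha]))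

theorem gamma_mulVec_apply (v : Fin r → ℝ) (j : Fin m) :
    (Gamma a b *ᵥ v) j = ∑ i, ((b i j : ℝ) - a i j) * v i := by
  simp [mulVec, dotProduct, Gamma]

theorem gamma_mulVec_rate_pos (hk : ∀ i, 0 ≤ k i) {y : Fin m → ℝ} (hy : ∀ l, 0 ≤ y l)
    {j : Fin m} (hyj : y j = 0) {i₀ : Fin r} (hb : 0 < b i₀ j) (hR : 0 < rate a k y i₀) :
    0 < (Gamma a b *ᵥ rate a k y) j := by
  have ha₀ : a i₀ j = 0 := by
    by_contra h
    exact hR.ne' (rate_eq_zero hyj h)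
  rw [gamma_mulVec_apply]
  refine Finset.sum_pos' (fun i _ => ?_) ⟨i₀, Finset.mem_univ _, by simp [ha₀, hb, hR]⟩
  by_cases ha : a i j = 0
  · simp only [ha, CharP.cast_eq_zero, sub_zero]
    exact mul_nonneg (Nat.cast_nonneg _) (rate_nonneg hy (hk i))
  · simp [rate_eq_zero hyj ha]

theorem exists_neg_mul_le_gamma_mulVec_rate (hk : ∀ i, 0 ≤ k i) {ρ : ℝ} (hρ : 1 ≤ ρ)
    (j : Fin m) : ∃ M, ∀ z : Fin m → ℝ, (∀ l, 0 ≤ z l) → (∀ l, z l ≤ ρ) →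
      -(M * z j) ≤ (Gamma a b *ᵥ rate a k z) j := by
  refine ⟨∑ i, a i j * k i * ρ ^ ∑ l, a i l, fun z hz hzρ => ?_⟩
  rw [gamma_mulVec_apply, Finset.sum_mul, ← Finset.sum_neg_distrib]
  refine Finset.sum_le_sum fun i _ => ?_
  have hR : (a i j : ℝ) * rate a k z i ≤ a i j * k i * ρ ^ (∑ l, a i l) * z j := by
    by_cases ha : a i j = 0
    · simp [ha]
    · calc (a i j : ℝ) * rate a k z i = a i j * k i * ∏ l, z l ^ a i l :=
            (mul_assoc _ _ _).symm
        _ ≤ a i j * k i * (z j * ρ ^ ∑ l, a i l) :=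
          mul_le_mul_of_nonneg_left (prod_pow_le_mul_pow_sum hz hzρ hρ ha)
            (mul_nonneg (Nat.cast_nonneg _) (hk i))
        _ = _ := by ring
  nlinarith [mul_nonneg (Nat.cast_nonneg (α := ℝ) (b i j)) (rate_nonneg hz (hk i) (a := a))]

theorem IsForwardSolution.coord_pos (hk : ∀ i, 0 ≤ k i) {x : ℝ → Fin m → ℝ}
    (hsol : IsForwardSolution a b k x) (hx₀ : ∀ l, 0 < x 0 l) {t : ℝ} (ht : 0 ≤ t)
    (l : Fin m) : 0 < x t l := by
  by_contra! hneg
  have hcont : ContinuousOn x (Icc 0 t) := fun s hs =>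
    (hsol s hs.1).continuousAt.continuousWithinAt
  obtain ⟨τ, hτ, hτ_mem, hpos⟩ := exists_first_entry hcont
    (isClosed_iUnion_of_finite fun l => isClosed_le (continuous_apply l) continuous_const)
    ⟨t, right_mem_Icc.2 ht, mem_iUnion.2 ⟨l, hneg⟩⟩
  obtain ⟨j, hj : x τ j ≤ 0⟩ := mem_iUnion.1 hτ_mem
  obtain ⟨C, hC⟩ := isCompact_Icc.exists_bound_of_continuousOn hcont
  obtain ⟨M, hM⟩ := exists_neg_mul_le_gamma_mulVec_rate hk (le_max_right C 1) j
  have hder : ∀ s ∈ Icc 0 τ,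
      HasDerivAt (fun s => -x s j) (-(Gamma a b *ᵥ rate a k (x s)) j) s :=
    fun s hs => (hasDerivAt_pi.1 (hsol s hs.1) j).neg
  have hbound : ∀ s ∈ Ico 0 τ, -(Gamma a b *ᵥ rate a k (x s)) j ≤ -M * -x s j + 0 := by
    intro s hs
    have hs_pos : ∀ l, 0 < x s l := by simpa using hpos s hs
    have hs_le : ∀ l, x s l ≤ max C 1 := fun l =>
      calc x s l ≤ ‖x s‖ := (le_abs_self _).trans (norm_le_pi_norm (x s) l)
        _ ≤ max C 1 := (hC s ⟨hs.1, hs.2.le.trans hτ.2⟩).trans (le_max_left _ _)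
    linarith [hM (x s) (fun l => (hs_pos l).le) hs_le]
  have hgron := le_gronwallBound_of_liminf_deriv_right_le (f := fun s => -x s j)
    (fun s hs => (hder s hs).continuousAt.continuousWithinAt)
    (fun s hs _ hr =>
      (hder s (Ico_subset_Icc_self hs)).hasDerivWithinAt.liminf_right_slope_le hr)
    le_rfl hbound τ ⟨hτ.1, le_rfl⟩
  rw [gronwallBound_ε0] at hgron
  nlinarith [mul_pos (hx₀ j) (Real.exp_pos (-M * (τ - 0)))]

end MassAction

/-- if the ω-limit set of a forward solution from a positive initial condition
meets `L_I`, then `I` is a semi-locking set. -/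
theorem stmt1 {m r : ℕ} (a b : Fin r → Fin m → ℕ) (k : Fin r → ℝ) (hk : ∀ i, 0 < k i)
    (I : Set (Fin m)) (hInonempty : I.Nonempty)
    (x₀ : Fin m → ℝ) (hx₀ : ∀ i, 0 < x₀ i) (x : ℝ → Fin m → ℝ) (hinit : x 0 = x₀)
    (hsol : IsForwardSolution a b k x)
    (hω : (omegaLimitSet x ∩ LI I).Nonempty) :
    IsSemiLocking a b I := by
  obtain ⟨y, hyω, hy0, hyI, hyP⟩ := hω
  refine ⟨hInonempty, fun i ⟨j, hjI, hbj⟩ => ?_⟩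
  by_contra! hcons
  have hk₀ : ∀ i, 0 ≤ k i := fun i => (hk i).le
  have hRy : 0 < rate a k y i :=
    rate_pos (hk i) fun l hl => hyP l fun hlI => (hcons l hlI).not_gt hl
  have hf : Continuous fun z => Gamma a b *ᵥ rate a k z :=
    continuous_const.matrix_mulVec (continuous_rate a k)
  have hpos : ∀ t, 0 ≤ t → 0 ≤ x t j := fun t ht =>
    (hsol.coord_pos hk₀ (by rwa [hinit]) ht j).le
  exact not_mapClusterPt_of_inward (ContinuousLinearMap.proj (φ := fun _ => ℝ) j)
    hf.continuousAt hsol hpos (hyI j hjI) (gamma_mulVec_rate_pos hk₀ hy0 (hyI j hjI) hbj hRy)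
    hyω
end

section
/- Let I ⊆ {1,…,m} be a semi-locking set of a mass-action system and suppose R_i ≼_I R_j, i.e. α_{ik} ≥ α_{jk} for all k ∈ I with strict inequality for at least one k ∈ I. Then for every ε > 0 and every compact subset K of L_I, there exists a neighbourhood U of K in ℝ^m_{≥0} such that R_i(x) ≤ ε R_j(x) for all x ∈ U. -/
open scoped BigOperators
open Matrix Filter

/-- The rate of reaction `i` with the monomial `∏ x_l ^ c_l` divided out; the exponents
`a i l - c l` truncate, so this is meaningful only when `c ≤ a i`. -/
noncomputable def reducedRate {m r : ℕ} (a : Fin r → Fin m → ℕ) (k : Fin r → ℝ)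
    (c : Fin m → ℕ) (x : Fin m → ℝ) (i : Fin r) : ℝ :=
  k i * ∏ l, x l ^ (a i - c) l

theorem rate_eq_reducedRate_mul {m r : ℕ} (a : Fin r → Fin m → ℕ) (k : Fin r → ℝ)
    {c : Fin m → ℕ} (x : Fin m → ℝ) {i : Fin r} (hc : c ≤ a i) :
    rate a k x i = reducedRate a k c x i * ∏ l, x l ^ c l := by
  conv_lhs => rw [rate, ← tsub_add_cancel_of_le hc]
  simp only [reducedRate, Pi.add_apply, pow_add, Finset.prod_mul_distrib, mul_assoc]

theorem continuous_reducedRate {m r : ℕ} (a : Fin r → Fin m → ℕ) (k : Fin r → ℝ)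
    (c : Fin m → ℕ) (i : Fin r) : Continuous fun x => reducedRate a k c x i := by
  unfold reducedRate
  fun_prop

section LI

variable {m : ℕ} {I : Set (Fin m)} {x : Fin m → ℝ}

theorem prod_pow_eq_zero_of_mem_LI (hx : x ∈ LI I) {n : Fin m → ℕ} {l₀ : Fin m}
    (hl₀ : l₀ ∈ I) (hn : n l₀ ≠ 0) : ∏ l, x l ^ n l = 0 :=
  Finset.prod_eq_zero (Finset.mem_univ l₀) (by rw [hx.2.1 l₀ hl₀, zero_pow hn])

theorem prod_pow_pos_of_mem_LI (hx : x ∈ LI I) {n : Fin m → ℕ} (hn : ∀ l ∈ I, n l = 0) :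
    0 < ∏ l, x l ^ n l := by
  refine Finset.prod_pos fun l _ => ?_
  by_cases hl : l ∈ I
  · simp [hn l hl]
  · exact pow_pos (hx.2.2 l hl) _

end LI

theorem stmt2_general {m r : ℕ} (a : Fin r → Fin m → ℕ) (k : Fin r → ℝ) (hk : ∀ i, 0 < k i)
    (I : Set (Fin m)) (i j : Fin r) (hij : prec a I i j)
    (ε : ℝ) (hε : 0 < ε) (K : Set (Fin m → ℝ)) (hKL : K ⊆ LI I) :
    ∃ U : Set (Fin m → ℝ), IsOpen U ∧ K ⊆ U ∧
      ∀ x ∈ U, (∀ l, 0 ≤ x l) → rate a k x i ≤ ε * rate a k x j := by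
  obtain ⟨hle, l₀, hl₀I, hl₀⟩ := hij
  -- Divide both rates by the part of `R_j`'s monomial in the species of `I`: the reduced
  -- `R_i` still vanishes on `L_I` while the reduced `R_j` is positive there, and the strict
  -- inequality between two continuous functions holds on an open set.
  set c := I.indicator (a j)
  have hci : c ≤ a i := fun l => by
    by_cases hl : l ∈ I
    · simpa [c, hl] using hle l hl
    · simp [c, hl]
  refine ⟨{x | reducedRate a k c x i < ε * reducedRate a k c x j},
    isOpen_lt (continuous_reducedRate a k c i)
      ((continuous_reducedRate a k c j).const_mul ε), fun z hz => ?_, fun x hx hx0 => ?_⟩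
  · have hi : reducedRate a k c z i = 0 := by
      refine mul_eq_zero_of_right _ (prod_pow_eq_zero_of_mem_LI (hKL hz) hl₀I ?_)
      simpa [c, hl₀I] using Nat.sub_ne_zero_of_lt hl₀
    have hj : 0 < reducedRate a k c z j :=
      mul_pos (hk j) (prod_pow_pos_of_mem_LI (hKL hz) fun l hl => by simp [c, hl])
    rw [Set.mem_ofPred_eq, hi]
    positivity
  · rw [rate_eq_reducedRate_mul a k x hci,
      rate_eq_reducedRate_mul a k x (Set.indicator_le_self I (a j)), ← mul_assoc]
    exact mul_le_mul_of_nonneg_right hx.le (Finset.prod_nonneg fun l _ => pow_nonneg (hx0 l) _)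

/-- if `I` is a semi-locking set and `R_i ≼_I R_j`, then for every `ε > 0` and
every compact `K ⊆ L_I` there is a neighbourhood `U` of `K` in `ℝ^m_{≥0}` on which
`R_i(x) ≤ ε R_j(x)`. -/
theorem stmt2 {m r : ℕ} (a b : Fin r → Fin m → ℕ) (k : Fin r → ℝ) (hk : ∀ i, 0 < k i)
    (I : Set (Fin m)) (hI : IsSemiLocking a b I) (i j : Fin r) (hij : prec a I i j)
    (ε : ℝ) (hε : 0 < ε) (K : Set (Fin m → ℝ)) (hK : IsCompact K) (hKL : K ⊆ LI I) :
    ∃ U : Set (Fin m → ℝ), IsOpen U ∧ K ⊆ U ∧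
      ∀ x ∈ U, (∀ l, 0 ≤ x l) → rate a k x i ≤ ε * rate a k x j :=
  stmt2_general a k hk I i j hij ε hε K hKL
end

section
/- Consider a weakly reversible mass-action system with a semi-locking set I ⊆ {1,…,m}. If F_I = closure(C_{x₀}) ∩ L_I is a facet of C_{x₀} for some x₀ ∈ ℝ^m_{>0}, then I is weakly dynamically non-emptiable. -/
open scoped BigOperators
open Matrix Filter

/-! Pick `y ∈ F_I` and put `w = x₀ - y ∈ S`, so that `w = x₀ > 0` on `I`. Since `F_I` lies in
`y + (S ∩ {u | u = 0 on I})` and has dimension `s - 1`, the restriction of `S` to the coordinates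
in `I` is the line spanned by `w`. Hence reaction `i` changes the `I`-coordinates by `c i • w`,
and on `I` the vector `Γ v` equals `(∑ i, c i * v i) • w`. By weak reversibility a reaction with
`c i < 0` is undone along a path, which must contain a reaction `j` with `c j > 0` whose reactant
lies below that of `i`; these pairs form `J`. For small `ε`, the constraints `v i ≤ ε v j` on `J`
let the positive part of `∑ i, c i * v i` dominate, so `∑ i, c i * v i ≤ 0` forces `v i = 0`
whenever `c i ≠ 0`, which puts `v` in `ker(I, J, ε)`. -/

open Module in
theorem exists_smul_eq_of_finrank_le_finrank_inf_ker_add_one {K V W : Type*} [Field K]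
    [AddCommGroup V] [Module K V] [AddCommGroup W] [Module K W]
    {S : Submodule K V} [FiniteDimensional K S] (π : V →ₗ[K] W)
    (hS : finrank K S ≤ finrank K ↥(S ⊓ LinearMap.ker π) + 1)
    {w : V} (hw : w ∈ S) (hπw : π w ≠ 0) {u : V} (hu : u ∈ S) :
    ∃ t : K, t • π w = π u := by
  set f := π.domRestrict S
  have hker : finrank K (LinearMap.ker f) = finrank K ↥(S ⊓ LinearMap.ker π) := by
    rw [← (Submodule.comapSubtypeEquivOfLe (inf_le_left : S ⊓ LinearMap.ker π ≤ S)).finrank_eq,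
      Submodule.comap_inf, Submodule.comap_subtype_self, top_inf_eq, LinearMap.ker_domRestrict]
  have hrange : K ∙ π w = LinearMap.range f := by
    refine Submodule.eq_of_le_of_finrank_le ?_ ?_
    · exact (Submodule.span_singleton_le_iff_mem _ _).2 ⟨⟨w, hw⟩, rfl⟩
    · have := LinearMap.finrank_range_add_finrank_ker f
      rw [finrank_span_singleton hπw]
      omega
  have hπu : π u ∈ LinearMap.range f := ⟨⟨u, hu⟩, rfl⟩
  rwa [← hrange, Submodule.mem_span_singleton] at hπu

theorem exists_pos_le_of_pos {ι : Type*} [Fintype ι] (c : ι → ℝ) :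
    ∃ δ > 0, ∀ j, 0 < c j → δ ≤ c j := by
  set s := insert 1 ((Finset.univ.filter (0 < c ·)).image c)
  refine ⟨s.min' (Finset.insert_nonempty _ _), ?_, fun j hj => s.min'_le _ ?_⟩
  · simp [s, Finset.lt_min'_iff]
  · exact Finset.mem_insert_of_mem (Finset.mem_image_of_mem c (by simpa using hj))

theorem exists_pos_forall_eq_zero_of_sum_mul_nonpos {ι : Type*} [Fintype ι] (c : ι → ℝ) :
    ∃ ε > 0, ∀ v : ι → ℝ, (∀ i, 0 ≤ v i) → ∑ i, c i * v i ≤ 0 →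
      (∀ i, c i < 0 → ∃ j, 0 < c j ∧ v i ≤ ε * v j) → ∀ i, c i ≠ 0 → v i = 0 := by
  obtain ⟨δ, hδ, hδc⟩ := exists_pos_le_of_pos c
  set C := ∑ i, |c i|
  have hC : 0 ≤ C := Finset.sum_nonneg fun i _ => abs_nonneg _
  refine ⟨δ / (C + 1), by positivity, fun v hv hsum hdom => ?_⟩
  set ε := δ / (C + 1)
  have hεC : ε * C < δ := by
    rw [div_mul_eq_mul_div, div_lt_iff₀ (by positivity)]
    nlinarith
  set M := ∑ j ∈ Finset.univ.filter (0 < c ·), v j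
  have hvM : ∀ j, 0 < c j → v j ≤ M := fun j hj =>
    Finset.single_le_sum (fun i _ => hv i) (Finset.mem_filter.2 ⟨Finset.mem_univ j, hj⟩)
  have hM0 : 0 ≤ M := Finset.sum_nonneg fun i _ => hv i
  have hterm : ∀ i, (if 0 < c i then δ * v i else 0) - ε * M * |c i| ≤ c i * v i := by
    intro i
    split_ifs with hpos
    · have : 0 ≤ ε * M * |c i| := by positivity
      nlinarith [mul_le_mul_of_nonneg_right (hδc i hpos) (hv i)]
    · rcases (not_lt.1 hpos).lt_or_eq with hneg | hzero
      · obtain ⟨j, hj, hij⟩ := hdom i hneg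
        have hviM : v i ≤ ε * M := hij.trans (mul_le_mul_of_nonneg_left (hvM j hj) (by positivity))
        rw [abs_of_neg hneg]
        nlinarith
      · simp [hzero]
  have hM : M = 0 := by
    have hlow : δ * M - ε * M * C ≤ ∑ i, c i * v i := by
      calc δ * M - ε * M * C = ∑ i, ((if 0 < c i then δ * v i else 0) - ε * M * |c i|) := by
            rw [Finset.sum_sub_distrib, ← Finset.sum_filter, ← Finset.mul_sum, ← Finset.mul_sum]
        _ ≤ ∑ i, c i * v i := Finset.sum_le_sum fun i _ => hterm i
    have : (δ - ε * C) * M ≤ 0 := by linarith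
    exact le_antisymm (nonpos_of_mul_nonpos_right this (by linarith)) hM0
  have hup : ∀ j, 0 < c j → v j = 0 := fun j hj => le_antisymm (hM ▸ hvM j hj) (hv j)
  intro i hi
  rcases hi.lt_or_gt with hneg | hpos
  · obtain ⟨j, hj, hij⟩ := hdom i hneg
    rw [hup j hj, mul_zero] at hij
    exact le_antisymm hij (hv i)
  · exact hup i hpos

theorem Relation.ReflTransGen.exists_step_lt {α β : Type*} [LinearOrder β] {R : α → α → Prop}
    (h : α → β) {y z : α} (hyz : Relation.ReflTransGen R y z) (hlt : h y < h z) :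
    ∃ u u', R u u' ∧ h u < h u' ∧ h u < h z ∧ Relation.ReflTransGen R u z := by
  induction hyz using Relation.ReflTransGen.head_induction_on with
  | refl => exact absurd hlt (lt_irrefl _)
  | @head y u hyu huz ih =>
    by_cases hup : h y < h u
    · exact ⟨y, u, hyu, hup, hlt, huz.head hyu⟩
    · exact ih ((not_lt.1 hup).trans_lt hlt)

def reactionStep {m r : ℕ} (a b : Fin r → Fin m → ℕ) (y z : Fin m → ℕ) : Prop :=
  ∃ i, a i = y ∧ b i = z

theorem sub_mem_stoichSubspace_of_mem_closure {m r : ℕ} {a b : Fin r → Fin m → ℕ}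
    {x₀ z : Fin m → ℝ} (hz : z ∈ closure (compatClass a b x₀)) :
    z - x₀ ∈ stoichSubspace a b := by
  have hclosed : IsClosed {x : Fin m → ℝ | x - x₀ ∈ stoichSubspace a b} :=
    (Submodule.closed_of_finiteDimensional _).preimage (continuous_id.sub continuous_const)
  exact closure_minimal (fun x hx => hx.2) hclosed hz

theorem vectorSpan_FI_le {m r : ℕ} (a b : Fin r → Fin m → ℕ) (x₀ : Fin m → ℝ)
    (I : Set (Fin m)) :
    vectorSpan ℝ (FI a b x₀ I) ≤
      stoichSubspace a b ⊓ LinearMap.ker (LinearMap.funLeft ℝ ℝ ((↑) : I → Fin m)) := by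
  rw [vectorSpan_def, Submodule.span_le]
  rintro _ ⟨z, ⟨hz, hzI⟩, z', ⟨hz', hz'I⟩, rfl⟩
  refine ⟨?_, ?_⟩
  · have := sub_mem (sub_mem_stoichSubspace_of_mem_closure hz)
      (sub_mem_stoichSubspace_of_mem_closure hz')
    rwa [sub_sub_sub_cancel_right] at this
  · ext l
    simp [LinearMap.funLeft, hzI.2.1 l l.2, hz'I.2.1 l l.2]

theorem Gamma_col_mem_stoichSubspace {m r : ℕ} (a b : Fin r → Fin m → ℕ) (i : Fin r) :
    (fun l => (b i l : ℝ) - a i l) ∈ stoichSubspace a b :=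
  ⟨Pi.single i 1, by ext l; simp [Matrix.mulVec_single, Gamma]⟩

theorem exists_forall_stoichSubspace_eq_mul_of_isFacet {m r : ℕ} {a b : Fin r → Fin m → ℕ}
    {I : Set (Fin m)} {x₀ : Fin m → ℝ} (hI : I.Nonempty) (hx₀ : ∀ l, 0 < x₀ l)
    (hfacet : IsFacet a b (FI a b x₀ I)) :
    ∃ w : Fin m → ℝ, (∀ l ∈ I, 0 < w l) ∧
      ∀ u ∈ stoichSubspace a b, ∃ t : ℝ, ∀ l ∈ I, u l = t * w l := by
  obtain ⟨⟨y, hyC, hyI⟩, hdim⟩ := hfacet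
  obtain ⟨l₀, hl₀⟩ := hI
  have hwI : ∀ l ∈ I, (x₀ - y) l = x₀ l := fun l hl => by simp [hyI.2.1 l hl]
  have hw : x₀ - y ∈ stoichSubspace a b := by
    rw [← neg_sub]; exact neg_mem (sub_mem_stoichSubspace_of_mem_closure hyC)
  refine ⟨x₀ - y, fun l hl => hwI l hl ▸ hx₀ l, fun u hu => ?_⟩
  have hS : Module.finrank ℝ (stoichSubspace a b) ≤ Module.finrank ℝ ↥(stoichSubspace a b ⊓
      LinearMap.ker (LinearMap.funLeft ℝ ℝ ((↑) : I → Fin m))) + 1 := by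
    have := Submodule.finrank_mono (vectorSpan_FI_le a b x₀ I)
    rw [setDim, direction_affineSpan] at hdim
    change _ = Module.finrank ℝ (stoichSubspace a b) - 1 at hdim
    omega
  have hπw : LinearMap.funLeft ℝ ℝ ((↑) : I → Fin m) (x₀ - y) ≠ 0 := fun h => by
    have := congrFun h ⟨l₀, hl₀⟩
    simp only [LinearMap.funLeft_apply, Pi.zero_apply] at this
    exact (hx₀ l₀).ne' (hwI l₀ hl₀ ▸ this)
  obtain ⟨t, ht⟩ := exists_smul_eq_of_finrank_le_finrank_inf_ker_add_one _ hS hw hπw hu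
  exact ⟨t, fun l hl => (congrFun ht ⟨l, hl⟩).symm⟩

section Collinear

variable {m r : ℕ} {a b : Fin r → Fin m → ℕ} {I : Set (Fin m)} {w : Fin m → ℝ} {c : Fin r → ℝ}

theorem mulVec_Gamma_eq (hc : ∀ i, ∀ l ∈ I, (b i l : ℝ) - a i l = c i * w l)
    (v : Fin r → ℝ) {l : Fin m} (hl : l ∈ I) :
    (Gamma a b *ᵥ v) l = (∑ i, c i * v i) * w l := by
  simp only [mulVec, dotProduct, Finset.sum_mul]
  refine Finset.sum_congr rfl fun i _ => ?_
  rw [show Gamma a b l i = (b i l : ℝ) - a i l from rfl, hc i l hl]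
  ring

theorem exists_sub_eq_mul_of_reflTransGen (hc : ∀ i, ∀ l ∈ I, (b i l : ℝ) - a i l = c i * w l)
    {y z : Fin m → ℕ} (h : Relation.ReflTransGen (reactionStep a b) y z) :
    ∃ t : ℝ, ∀ l ∈ I, (z l : ℝ) - y l = t * w l := by
  induction h with
  | refl => exact ⟨0, fun l _ => by simp⟩
  | tail _ hstep ih =>
    obtain ⟨t, ht⟩ := ih
    obtain ⟨i, rfl, rfl⟩ := hstep
    exact ⟨t + c i, fun l hl => by linarith [ht l hl, hc i l hl]⟩

/-- Undoing a reaction with `c i < 0` requires a reaction with `c j > 0`, and the first one that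
starts below the reactant of `i` is `≼_I`-below `i`. -/
theorem exists_pos_prec_of_neg (hwr : WeaklyReversible a b)
    (hc : ∀ i, ∀ l ∈ I, (b i l : ℝ) - a i l = c i * w l) (hw : ∀ l ∈ I, 0 < w l)
    {l₀ : Fin m} (hl₀ : l₀ ∈ I) {i : Fin r} (hi : c i < 0) :
    ∃ j, 0 < c j ∧ prec a I i j := by
  have hbi : b i l₀ < a i l₀ := by
    have := hc i l₀ hl₀
    exact_mod_cast (by nlinarith [hw l₀ hl₀] : (b i l₀ : ℝ) < a i l₀)
  obtain ⟨_, _, ⟨j, rfl, rfl⟩, hj, hji, hpath⟩ :=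
    Relation.ReflTransGen.exists_step_lt (fun y : Fin m → ℕ => y l₀) (hwr i) hbi
  obtain ⟨t, ht⟩ := exists_sub_eq_mul_of_reflTransGen hc hpath
  have hcj : 0 < c j := by
    have := hc j l₀ hl₀
    have : (a j l₀ : ℝ) < b j l₀ := by exact_mod_cast hj
    exact pos_of_mul_pos_left (by linarith) (hw l₀ hl₀).le
  have htpos : 0 < t := by
    have := ht l₀ hl₀
    have : (a j l₀ : ℝ) < a i l₀ := by exact_mod_cast hji
    exact pos_of_mul_pos_left (by linarith) (hw l₀ hl₀).le
  have hlt : ∀ l ∈ I, a j l < a i l := fun l hl => by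
    have := ht l hl
    exact_mod_cast (by nlinarith [hw l hl] : (a j l : ℝ) < a i l)
  exact ⟨j, hcj, fun l hl => (hlt l hl).le, l₀, hl₀, hlt l₀ hl₀⟩

end Collinear

theorem stmt7_general {m r : ℕ} (a b : Fin r → Fin m → ℕ)
    (hwr : WeaklyReversible a b)
    (I : Set (Fin m)) (hI : IsSemiLocking a b I)
    (x₀ : Fin m → ℝ) (hx₀ : ∀ i, 0 < x₀ i)
    (hfacet : IsFacet a b (FI a b x₀ I)) :
    WeaklyDynNonEmptiable a b I := by
  obtain ⟨l₀, hl₀⟩ := hI.1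
  obtain ⟨w, hw, hS⟩ := exists_forall_stoichSubspace_eq_mul_of_isFacet ⟨l₀, hl₀⟩ hx₀ hfacet
  choose c hc using fun i => hS _ (Gamma_col_mem_stoichSubspace a b i)
  obtain ⟨ε, hε, hvanish⟩ := exists_pos_forall_eq_zero_of_sum_mul_nonpos c
  refine ⟨ε, hε, {p | c p.1 < 0 ∧ 0 < c p.2 ∧ prec a I p.1 p.2}, fun p hp => hp.2.2, ?_⟩
  rintro v ⟨⟨hv, hcrit⟩, -, hfeas⟩
  have hsum : ∑ i, c i * v i ≤ 0 := by
    have := hcrit l₀ hl₀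
    rw [mulVec_Gamma_eq hc v hl₀] at this
    exact nonpos_of_mul_nonpos_left this (hw l₀ hl₀)
  have hv0 : ∀ i, c i ≠ 0 → v i = 0 := hvanish v hv hsum fun i hi => by
    obtain ⟨j, hj, hij⟩ := exists_pos_prec_of_neg hwr hc hw hl₀ hi
    exact ⟨j, hj, hfeas (i, j) ⟨hi, hj, hij⟩⟩
  have hsum0 : ∑ i, c i * v i = 0 := Finset.sum_eq_zero fun i _ => by
    by_cases h : c i = 0 <;> simp [h, hv0]
  refine ⟨hv, fun l hl => by rw [mulVec_Gamma_eq hc v hl, hsum0, zero_mul], ?_⟩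
  rintro ⟨i, j⟩ ⟨hi, hj, -⟩
  simp [hv0 i hi.ne, hv0 j hj.ne']

/-- in a weakly reversible mass-action system, a semi-locking set `I` for which
`F_I` is a facet is weakly dynamically non-emptiable. -/
theorem stmt7 {m r : ℕ} (a b : Fin r → Fin m → ℕ) (k : Fin r → ℝ) (hk : ∀ i, 0 < k i)
    (hwr : WeaklyReversible a b)
    (I : Set (Fin m)) (hI : IsSemiLocking a b I)
    (x₀ : Fin m → ℝ) (hx₀ : ∀ i, 0 < x₀ i)
    (hfacet : IsFacet a b (FI a b x₀ I)) :
    WeaklyDynNonEmptiable a b I :=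
  stmt7_general a b hwr I hI x₀ hx₀ hfacet
end

section
/- Let I ⊆ {1,…,m} be nonempty and suppose F̃_I = (x̃₀ + S) ∩ L_I ≠ ∅ for some x̃₀ ∈ ℝ^m_{>0}. Then: (1) for every x₀ ∈ ℝ^m_{>0}, the set F_I = (x₀ + S) ∩ L_I is either empty or has affine-hull dimension equal to that of F̃_I; and (2) for every x ∈ L_I there exists x₀ ∈ ℝ^m_{>0} such that x ∈ (x₀ + S) ∩ L_I. -/
open scoped BigOperators
open Matrix Filter

/-- `(x₀ + S) ∩ L_I`. -/
def FIaff {m r : ℕ} (a b : Fin r → Fin m → ℕ) (x₀ : Fin m → ℝ) (I : Set (Fin m)) :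
    Set (Fin m → ℝ) :=
  {x | x - x₀ ∈ stoichSubspace a b} ∩ LI I

/-!
Near any of its points `z`, the set `(x₀ + S) ∩ L_I` agrees with the affine space
`z + (S ∩ {v | v_I = 0})`, because the strict inequalities `x_i > 0` for `i ∉ I` survive small
perturbations. Hence its affine hull has direction `S ∩ {v | v_I = 0}`, which does not depend on
`x₀`. For the second part, if `y ∈ (x̃₀ + S) ∩ L_I` and `x ∈ L_I`, then `x + ε (x̃₀ - y)` is
positive for small `ε > 0` (on `I` it equals `ε x̃₀`) and differs from `x` by an element of `S`.
-/

open Topology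

lemma exists_pos_forall_pos_add_mul {ι : Type*} [Finite ι] (z w : ι → ℝ) :
    ∃ ε > (0 : ℝ), ∀ i, 0 < z i → 0 < z i + ε * w i := by
  have hsmall : ∀ᶠ ε in 𝓝 (0 : ℝ), ∀ i, 0 < z i → 0 < z i + ε * w i := by
    refine eventually_all.2 fun i => ?_
    by_cases hz : 0 < z i
    · have hcont : Tendsto (fun ε : ℝ => z i + ε * w i) (𝓝 0) (𝓝 (z i)) :=
        (by fun_prop : Continuous fun ε : ℝ => z i + ε * w i).tendsto' 0 (z i) (by simp)
      exact (hcont.eventually (lt_mem_nhds hz)).mono fun _ h _ => h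
    · exact Eventually.of_forall fun _ h => absurd h hz
  obtain ⟨ε, hε, hεpos⟩ :=
    ((hsmall.filter_mono nhdsWithin_le_nhds).and (self_mem_nhdsWithin (s := Set.Ioi 0))).exists
  exact ⟨ε, hεpos, hε⟩

section LI

variable {m : ℕ} {I : Set (Fin m)}

lemma mem_LI_iff {x : Fin m → ℝ} :
    x ∈ LI I ↔ (∀ i ∈ I, x i = 0) ∧ ∀ i ∉ I, 0 < x i := by
  refine ⟨fun h => h.2, fun h => ⟨fun i => ?_, h⟩⟩
  by_cases hi : i ∈ I
  · exact (h.1 i hi).ge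
  · exact (h.2 i hi).le

lemma exists_pos_add_smul_mem_LI {z w : Fin m → ℝ} (hz : z ∈ LI I)
    (hw : w ∈ Submodule.pi I fun _ => (⊥ : Submodule ℝ ℝ)) :
    ∃ ε > (0 : ℝ), z + ε • w ∈ LI I := by
  obtain ⟨ε, hε, hpos⟩ := exists_pos_forall_pos_add_mul z w
  rw [mem_LI_iff] at hz
  refine ⟨ε, hε, mem_LI_iff.2 ⟨fun i hi => ?_, fun i hi => hpos i (hz.2 i hi)⟩⟩
  simp [hz.1 i hi, (Submodule.mem_bot ℝ).1 (Submodule.mem_pi.1 hw i hi)]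

lemma sub_mem_pi_bot_of_mem_LI {x y : Fin m → ℝ} (hx : x ∈ LI I) (hy : y ∈ LI I) :
    x - y ∈ Submodule.pi I fun _ => (⊥ : Submodule ℝ ℝ) :=
  Submodule.mem_pi.2 fun i hi => by simp [hx.2.1 i hi, hy.2.1 i hi]

variable (S : Submodule ℝ (Fin m → ℝ))

theorem direction_affineSpan_inter_LI {x₀ z : Fin m → ℝ}
    (hz : z ∈ {x | x - x₀ ∈ S} ∩ LI I) :
    (affineSpan ℝ ({x | x - x₀ ∈ S} ∩ LI I)).direction =
      S ⊓ Submodule.pi I fun _ => (⊥ : Submodule ℝ ℝ) := by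
  apply le_antisymm
  · have hsub : {x | x - x₀ ∈ S} ∩ LI I ⊆
        AffineSubspace.mk' z (S ⊓ Submodule.pi I fun _ => (⊥ : Submodule ℝ ℝ)) := by
      rintro x ⟨hxS, hxL⟩
      refine AffineSubspace.mem_mk'.2 ⟨?_, sub_mem_pi_bot_of_mem_LI hxL hz.2⟩
      simpa using S.sub_mem hxS hz.1
    simpa using AffineSubspace.direction_le (affineSpan_le.2 hsub)
  · rintro w ⟨hwS, hwI⟩
    obtain ⟨ε, hε, hεL⟩ := exists_pos_add_smul_mem_LI hz.2 hwI
    have hmem : z + ε • w ∈ {x | x - x₀ ∈ S} ∩ LI I := by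
      refine ⟨?_, hεL⟩
      simpa [add_sub_right_comm] using S.add_mem hz.1 (S.smul_mem ε hwS)
    have hdir := AffineSubspace.vsub_mem_direction (subset_affineSpan ℝ _ hmem)
      (subset_affineSpan ℝ _ hz)
    rwa [vsub_eq_sub, add_sub_cancel_left, Submodule.smul_mem_iff _ hε.ne'] at hdir

theorem exists_pos_sub_mem_of_mem_LI {xt y x : Fin m → ℝ} (hxt : ∀ i, 0 < xt i)
    (hy : y ∈ {x | x - xt ∈ S} ∩ LI I) (hx : x ∈ LI I) :
    ∃ x₀ : Fin m → ℝ, (∀ i, 0 < x₀ i) ∧ x ∈ {x | x - x₀ ∈ S} ∩ LI I := by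
  obtain ⟨ε, hε, hpos⟩ := exists_pos_forall_pos_add_mul x (xt - y)
  refine ⟨x + ε • (xt - y), fun i => ?_, ?_, hx⟩
  · by_cases hi : i ∈ I
    · simpa [hx.2.1 i hi, hy.2.2.1 i hi] using mul_pos hε (hxt i)
    · exact hpos i (hx.2.2 i hi)
  · have hdiff : x - (x + ε • (xt - y)) = ε • (y - xt) := by
      rw [sub_add_cancel_left, ← smul_neg, neg_sub]
    simpa [hdiff] using S.smul_mem ε hy.1

end LI

theorem stmt11_general {m r : ℕ} (a b : Fin r → Fin m → ℕ)
    (I : Set (Fin m))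
    (xt : Fin m → ℝ) (hxt : ∀ i, 0 < xt i) (hne : (FIaff a b xt I).Nonempty) :
    (∀ x₀ : Fin m → ℝ, (∀ i, 0 < x₀ i) →
       FIaff a b x₀ I = ∅ ∨ setDim (FIaff a b x₀ I) = setDim (FIaff a b xt I)) ∧
    (∀ x ∈ LI I, ∃ x₀ : Fin m → ℝ, (∀ i, 0 < x₀ i) ∧ x ∈ FIaff a b x₀ I) := by
  obtain ⟨y, hy⟩ := hne
  refine ⟨fun x₀ _ => ?_, fun x hx => exists_pos_sub_mem_of_mem_LI _ hxt hy hx⟩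
  rcases (FIaff a b x₀ I).eq_empty_or_nonempty with hempty | ⟨z, hz⟩
  · exact .inl hempty
  · right
    rw [setDim, setDim, FIaff, FIaff, direction_affineSpan_inter_LI _ hz,
      direction_affineSpan_inter_LI _ hy]

/-- if `(x̃₀ + S) ∩ L_I ≠ ∅` for some positive `x̃₀`, then for every positive
`x₀` the set `(x₀ + S) ∩ L_I` is empty or has the same affine-hull dimension, and every
point of `L_I` lies in `(x₀ + S) ∩ L_I` for some positive `x₀`. -/
theorem stmt11 {m r : ℕ} (a b : Fin r → Fin m → ℕ)
    (I : Set (Fin m)) (hInonempty : I.Nonempty)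
    (xt : Fin m → ℝ) (hxt : ∀ i, 0 < xt i) (hne : (FIaff a b xt I).Nonempty) :
    (∀ x₀ : Fin m → ℝ, (∀ i, 0 < x₀ i) →
       FIaff a b x₀ I = ∅ ∨ setDim (FIaff a b x₀ I) = setDim (FIaff a b xt I)) ∧
    (∀ x ∈ LI I, ∃ x₀ : Fin m → ℝ, (∀ i, 0 < x₀ i) ∧ x ∈ FIaff a b x₀ I) :=
  stmt11_general a b I xt hxt hne
end

section
/- Let I ⊆ {1,…,m} be a semi-locking set and let x(t) ∈ ℝ^m_{≥0} be a forward solution of the mass-action system ẋ = Γ R(x) with x_i(0) = 0 for all i ∈ I. Then x_i(t) = 0 for all t ≥ 0 and all i ∈ I. -/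
open scoped BigOperators
open Matrix Filter

/-!
The total mass `y = ∑_{j ∈ I} x_j` of a siphon satisfies `|y'| ≤ K y` while the trajectory
stays bounded: a reaction with a reactant `l ∈ I` has rate at most a constant times `x_l ≤ y`,
and a reaction without one has, by the siphon property, no product in `I` either, so it does
not change `y`. Grönwall's inequality and `y(0) = 0` then force `y ≡ 0`.
-/

theorem prod_pow_le_pow_sum_mul {ι : Type*} [Fintype ι] [DecidableEq ι] {x : ι → ℝ} {M : ℝ}
    (hM : 1 ≤ M) (hx0 : ∀ j, 0 ≤ x j) (hxM : ∀ j, x j ≤ M) {α : ι → ℕ} {l : ι} (hl : 0 < α l) :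
    ∏ j, x j ^ α j ≤ M ^ (∑ j, α j) * x l := by
  have hsum : α l - 1 + ∑ j ∈ Finset.univ.erase l, α j ≤ ∑ j, α j := by
    have := Finset.add_sum_erase Finset.univ α (Finset.mem_univ l)
    omega
  have hxl : x l ^ α l ≤ M ^ (α l - 1) * x l := by
    rw [← Nat.sub_add_cancel hl, pow_succ, Nat.add_sub_cancel]
    exact mul_le_mul_of_nonneg_right (pow_le_pow_left₀ (hx0 l) (hxM l) _) (hx0 l)
  calc ∏ j, x j ^ α j = x l ^ α l * ∏ j ∈ Finset.univ.erase l, x j ^ α j :=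
        (Finset.mul_prod_erase _ _ (Finset.mem_univ l)).symm
    _ ≤ M ^ (α l - 1) * x l * M ^ ∑ j ∈ Finset.univ.erase l, α j := by
        rw [← Finset.prod_pow_eq_pow_sum]
        exact mul_le_mul hxl (Finset.prod_le_prod (fun j _ => pow_nonneg (hx0 j) _)
          fun j _ => pow_le_pow_left₀ (hx0 j) (hxM j) _)
          (Finset.prod_nonneg fun j _ => pow_nonneg (hx0 j) _)
          (mul_nonneg (pow_nonneg (by linarith) _) (hx0 l))
    _ = M ^ (α l - 1 + ∑ j ∈ Finset.univ.erase l, α j) * x l := by ring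
    _ ≤ M ^ (∑ j, α j) * x l :=
        mul_le_mul_of_nonneg_right (pow_le_pow_right₀ hM hsum) (hx0 l)

section MassAction

variable {m r : ℕ} {a b : Fin r → Fin m → ℕ} {k : Fin r → ℝ}

theorem abs_rate_le_mul {x : Fin m → ℝ} {M : ℝ} (hM : 1 ≤ M) (hx0 : ∀ j, 0 ≤ x j)
    (hxM : ∀ j, x j ≤ M) {i : Fin r} {l : Fin m} (hl : 0 < a i l) :
    |rate a k x i| ≤ |k i| * M ^ (∑ j, a i j) * x l := by
  rw [rate, abs_mul, abs_of_nonneg (Finset.prod_nonneg fun j _ => pow_nonneg (hx0 j) _),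
    mul_assoc]
  exact mul_le_mul_of_nonneg_left (prod_pow_le_pow_sum_mul hM hx0 hxM hl) (abs_nonneg _)

theorem IsSemiLocking.gamma_eq_zero {I : Set (Fin m)} (hI : IsSemiLocking a b I) {i : Fin r}
    (hi : ∀ l ∈ I, a i l = 0) {j : Fin m} (hj : j ∈ I) : Gamma a b j i = 0 := by
  have hb : b i j = 0 := by
    by_contra hb
    obtain ⟨l, hlI, hl⟩ := hI.2 i ⟨j, hj, Nat.pos_of_ne_zero hb⟩
    exact hl.ne' (hi l hlI)
  simp [Gamma, hb, hi j hj]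

theorem IsSemiLocking.abs_sum_mulVec_rate_le {s : Finset (Fin m)}
    (hs : IsSemiLocking a b ↑s) {x : Fin m → ℝ} {M : ℝ} (hM : 1 ≤ M) (hx0 : ∀ j, 0 ≤ x j)
    (hxM : ∀ j, x j ≤ M) :
    |∑ j ∈ s, (Gamma a b *ᵥ rate a k x) j| ≤
      (∑ i, |∑ j ∈ s, Gamma a b j i| * (|k i| * M ^ (∑ j, a i j))) * ∑ j ∈ s, x j := by
  have hreaction : ∀ i, |(∑ j ∈ s, Gamma a b j i) * rate a k x i| ≤
      |∑ j ∈ s, Gamma a b j i| * (|k i| * M ^ (∑ j, a i j)) * ∑ j ∈ s, x j := by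
    intro i
    by_cases hi : ∃ l ∈ s, 0 < a i l
    · obtain ⟨l, hls, hl⟩ := hi
      rw [abs_mul, mul_assoc]
      refine mul_le_mul_of_nonneg_left ((abs_rate_le_mul hM hx0 hxM hl).trans ?_) (abs_nonneg _)
      exact mul_le_mul_of_nonneg_left (Finset.single_le_sum (fun j _ => hx0 j) hls)
        (mul_nonneg (abs_nonneg _) (pow_nonneg (by linarith) _))
    · push Not at hi
      rw [Finset.sum_eq_zero fun j hj =>
        hs.gamma_eq_zero (fun l hl => Nat.le_zero.mp (hi l hl)) (Finset.mem_coe.mpr hj)]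
      simp
  calc |∑ j ∈ s, (Gamma a b *ᵥ rate a k x) j|
      = |∑ i, (∑ j ∈ s, Gamma a b j i) * rate a k x i| := by
        simp only [mulVec, dotProduct, Finset.sum_mul]
        rw [Finset.sum_comm]
    _ ≤ ∑ i, |(∑ j ∈ s, Gamma a b j i) * rate a k x i| := Finset.abs_sum_le_sum_abs _ _
    _ ≤ _ := by
        rw [Finset.sum_mul]
        exact Finset.sum_le_sum fun i _ => hreaction i

end MassAction

theorem stmt14_general {m r : ℕ} (a b : Fin r → Fin m → ℕ) (k : Fin r → ℝ)
    (I : Set (Fin m)) (hI : IsSemiLocking a b I)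
    (x : ℝ → Fin m → ℝ) (hsol : IsForwardSolution a b k x)
    (hnonneg : ∀ t : ℝ, 0 ≤ t → ∀ i, 0 ≤ x t i)
    (hzero : ∀ i ∈ I, x 0 i = 0) :
    ∀ t : ℝ, 0 ≤ t → ∀ i ∈ I, x t i = 0 := by
  classical
  intro T hT
  set s := I.toFinset
  have hs : IsSemiLocking a b ↑s := by rwa [Set.coe_toFinset]
  have hderiv : ∀ t ∈ Set.Icc 0 T,
      HasDerivAt (fun t => ∑ j ∈ s, x t j) (∑ j ∈ s, (Gamma a b *ᵥ rate a k (x t)) j) t :=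
    fun t ht => HasDerivAt.fun_sum fun j _ => hasDerivAt_pi.mp (hsol t ht.1) j
  obtain ⟨C, hC⟩ := isCompact_Icc.exists_bound_of_continuousOn
    fun t ht => (hsol t ht.1).continuousAt.continuousWithinAt
  have hxM : ∀ t ∈ Set.Icc 0 T, ∀ j, x t j ≤ max C 1 := fun t ht j =>
    (le_abs_self _).trans ((norm_le_pi_norm (x t) j).trans ((hC t ht).trans (le_max_left _ _)))
  have hmass := eq_zero_of_abs_deriv_le_mul_abs_self_of_eq_zero_right
    (fun t ht => (hderiv t ht).continuousAt.continuousWithinAt)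
    (fun t ht => (hderiv t (Set.Ico_subset_Icc_self ht)).hasDerivWithinAt)
    (Finset.sum_eq_zero fun j hj => hzero j (Set.mem_toFinset.mp hj))
    (fun t ht => by
      rw [Real.norm_eq_abs, Real.norm_of_nonneg (Finset.sum_nonneg fun j _ => hnonneg t ht.1 j)]
      exact hs.abs_sum_mulVec_rate_le (le_max_right C 1) (hnonneg t ht.1)
        (hxM t (Set.Ico_subset_Icc_self ht)))
    T ⟨hT, le_rfl⟩
  intro i hi
  exact (Finset.sum_eq_zero_iff_of_nonneg fun j _ => hnonneg T hT j).mp hmass i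
    (Set.mem_toFinset.mpr hi)

/-- if `I` is a semi-locking set and a forward solution in `ℝ^m_{≥0}` has
`x_i(0) = 0` for all `i ∈ I`, then `x_i(t) = 0` for all `t ≥ 0` and all `i ∈ I`. -/
theorem stmt14 {m r : ℕ} (a b : Fin r → Fin m → ℕ) (k : Fin r → ℝ) (hk : ∀ i, 0 < k i)
    (I : Set (Fin m)) (hI : IsSemiLocking a b I)
    (x : ℝ → Fin m → ℝ) (hsol : IsForwardSolution a b k x)
    (hnonneg : ∀ t : ℝ, 0 ≤ t → ∀ i, 0 ≤ x t i)
    (hzero : ∀ i ∈ I, x 0 i = 0) :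
    ∀ t : ℝ, 0 ≤ t → ∀ i ∈ I, x t i = 0 :=
  stmt14_general a b k I hI x hsol hnonneg hzero
end
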